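/- arXiv:2305.06523 — 2 statements merged into one kernel-verified Lean document; each statement's English description precedes it below -/
import Mathlib

section
/- Let w : ℝ² → ℝ be a bounded differentiable function whose gradient is bounded, with ‖w‖∞ = sup_{z∈ℝ²} |w(z)| and ‖∇w‖∞ = sup_{z∈ℝ²} ‖∇w(z)‖₂. If u = (a,b) and v = (c,d) in ℝ² satisfy a ≤ c ≤ d ≤ b (nested intervals [c,d) ⊆ [a,b)), then for any L ≥ max{b−a, d−c}, ∫_ℝ |w(u)·χ_{[a,b)}(t) − w(v)·χ_{[c,d)}(t)| dt ≤ (‖w‖∞ + L·‖∇w‖∞)·‖u−v‖₁, where ‖u−v‖₁ = |a−c| + |b−d|. -/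
open MeasureTheory

/-- The indicator function of the half-open interval `[a, b)`. -/
noncomputable def chiIco (a b t : ℝ) : ℝ :=
  Set.indicator (Set.Ico a b) (fun _ => (1 : ℝ)) t

/-- The point `(a, b)` viewed as an element of the Euclidean plane `ℝ²`. -/
noncomputable def pt (a b : ℝ) : EuclideanSpace ℝ (Fin 2) :=
  (WithLp.equiv 2 (Fin 2 → ℝ)).symm ![a, b]

/-! On `[c, d)` the integrand is `|w u - w v| ≤ ‖∇w‖∞ ‖u - v‖₂` by the mean value inequality,
and on the two end pieces `[a, c)` and `[d, b)` it is `|w u| ≤ ‖w‖∞`. The middle piece has length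
`d - c ≤ L`, the end pieces have total length `(c - a) + (b - d) = ‖u - v‖₁`, and `‖·‖₂ ≤ ‖·‖₁`. -/

lemma pt_sub_pt (a b c d : ℝ) : pt a b - pt c d = pt (a - c) (b - d) := by
  ext i; fin_cases i <;> rfl

lemma norm_pt_le (x y : ℝ) : ‖pt x y‖ ≤ |x| + |y| := by
  have hsq : ‖pt x y‖ ^ 2 = x ^ 2 + y ^ 2 := by
    simp [EuclideanSpace.norm_eq, Fin.sum_univ_two, pt, Real.sq_sqrt, add_nonneg, sq_nonneg]
  nlinarith [norm_nonneg (pt x y), sq_abs x, sq_abs y, abs_nonneg x, abs_nonneg y,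
    mul_nonneg (abs_nonneg x) (abs_nonneg y)]

lemma abs_sub_le_of_norm_gradient_le {E : Type*} [NormedAddCommGroup E] [InnerProductSpace ℝ E]
    [CompleteSpace E] {f : E → ℝ} {C : ℝ} (hf : Differentiable ℝ f)
    (bound : ∀ z, ‖gradient f z‖ ≤ C) (x y : E) : |f x - f y| ≤ C * ‖x - y‖ :=
  convex_univ.norm_image_sub_le_of_norm_fderiv_le (fun z _ => hf z)
    (fun z _ => by simpa [gradient] using bound z) (Set.mem_univ y) (Set.mem_univ x)

lemma integrable_chiIco (a b : ℝ) : Integrable (chiIco a b) :=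
  (integrable_indicator_iff measurableSet_Ico).2 <|
    integrableOn_const (by simp [Real.volume_Ico])

lemma integral_chiIco {a b : ℝ} (h : a ≤ b) : ∫ t, chiIco a b t = b - a := by
  simp [chiIco, integral_indicator_const _ measurableSet_Ico, Real.volume_real_Ico_of_le h]

lemma abs_mul_chiIco_sub_mul_chiIco {a b c d : ℝ} (hac : a ≤ c) (hdb : d ≤ b) (A B t : ℝ) :
    |A * chiIco a b t - B * chiIco c d t|
      = |A - B| * chiIco c d t + |A| * (chiIco a b t - chiIco c d t) := by
  by_cases hcd : t ∈ Set.Ico c d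
  · have hab : t ∈ Set.Ico a b := Set.Ico_subset_Ico hac hdb hcd
    simp [chiIco, hab, hcd]
  · by_cases hab : t ∈ Set.Ico a b <;> simp [chiIco, hab, hcd]

lemma integral_abs_mul_chiIco_sub_mul_chiIco {a b c d : ℝ} (hac : a ≤ c) (hcd : c ≤ d)
    (hdb : d ≤ b) (A B : ℝ) :
    ∫ t, |A * chiIco a b t - B * chiIco c d t|
      = |A - B| * (d - c) + |A| * ((c - a) + (b - d)) := by
  have hab : Integrable fun t => chiIco a b t - chiIco c d t :=
    (integrable_chiIco a b).sub (integrable_chiIco c d)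
  simp_rw [abs_mul_chiIco_sub_mul_chiIco hac hdb]
  rw [integral_add ((integrable_chiIco c d).const_mul _) (hab.const_mul _),
    integral_const_mul, integral_const_mul,
    integral_sub (integrable_chiIco a b) (integrable_chiIco c d),
    integral_chiIco hcd, integral_chiIco (hac.trans (hcd.trans hdb))]
  ring

/-- **Case 3 of Lemma 1 (nested intervals).** If `w : ℝ² → ℝ` is a bounded differentiable
function whose gradient is bounded (`W` bounds `|w|`, `Wg` bounds the Euclidean norm of
`∇w`) and `a ≤ c ≤ d ≤ b` (so `[c,d) ⊆ [a,b)`), then for any `L ≥ max (b-a) (d-c)`,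
`∫ℝ |w(u)·χ_{[a,b)}(t) − w(v)·χ_{[c,d)}(t)| dt ≤ (W + L·Wg)·(|a−c| + |b−d|)`
where `u = (a,b)` and `v = (c,d)`. -/
theorem betti_term_stability_nested
    (w : EuclideanSpace ℝ (Fin 2) → ℝ) (W Wg : ℝ)
    (hdiff : Differentiable ℝ w)
    (hW : ∀ z, |w z| ≤ W)
    (hWg : ∀ z, ‖gradient w z‖ ≤ Wg)
    (a b c d L : ℝ) (hac : a ≤ c) (hcd : c ≤ d) (hdb : d ≤ b)
    (hL : max (b - a) (d - c) ≤ L) :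
    ∫ t : ℝ, |w (pt a b) * chiIco a b t - w (pt c d) * chiIco c d t|
      ≤ (W + L * Wg) * (|a - c| + |b - d|) := by
  rw [integral_abs_mul_chiIco_sub_mul_chiIco hac hcd hdb]
  have hWg0 : 0 ≤ Wg := (norm_nonneg _).trans (hWg 0)
  have hlip : |w (pt a b) - w (pt c d)| ≤ Wg * (|a - c| + |b - d|) := by
    calc _ ≤ Wg * ‖pt a b - pt c d‖ := abs_sub_le_of_norm_gradient_le hdiff hWg _ _
      _ ≤ Wg * (|a - c| + |b - d|) := by
        rw [pt_sub_pt]; exact mul_le_mul_of_nonneg_left (norm_pt_le _ _) hWg0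
  have hlen : (c - a) + (b - d) = |a - c| + |b - d| := by
    rw [abs_of_nonpos (by linarith : a - c ≤ 0), abs_of_nonneg (by linarith : 0 ≤ b - d)]; ring
  have hdcL : d - c ≤ L := (le_max_right _ _).trans hL
  rw [hlen]
  calc |w (pt a b) - w (pt c d)| * (d - c) + |w (pt a b)| * (|a - c| + |b - d|)
      ≤ Wg * (|a - c| + |b - d|) * L + W * (|a - c| + |b - d|) := by
        gcongr; exact hW _
    _ = (W + L * Wg) * (|a - c| + |b - d|) := by ring
end

section
/- Let I be a finite index set and, for each i ∈ I, let u_i = (a_i, b_i) and v_i = (c_i, d_i) be points of ℝ² with a_i ≤ b_i and c_i ≤ d_i (representing a matching between two persistence diagrams). Define the (unweighted) Betti functions β₁(t) = Σ_{i∈I} χ_{[a_i,b_i)}(t) and β₂(t) = Σ_{i∈I} χ_{[c_i,d_i)}(t). Then ∫_ℝ |β₁(t) − β₂(t)| dt ≤ Σ_{i∈I} (|a_i − c_i| + |b_i − d_i|); i.e., the L¹ distance between the Betti functions is bounded by the ℓ¹ transport cost of the matching, and hence by the L₁ 1-Wasserstein distance when the matching is optimal. -/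
/-
A point of `[a, b) ∆ [c, d)` lies between the two left endpoints or between the two right
endpoints, so `|χ_{[a,b)} - χ_{[c,d)}|` has integral at most `|a - c| + |b - d|`.
Summing over the matching and using the triangle inequality in `L¹` gives the bound.
-/

open MeasureTheory

lemma integral_chiIco_min_max (x y : ℝ) : ∫ t, chiIco (min x y) (max x y) t = |x - y| := by
  calc ∫ t, chiIco (min x y) (max x y) t = volume.real (Set.Ico (min x y) (max x y)) :=
        integral_indicator_one measurableSet_Ico
    _ = |x - y| := by rw [Real.volume_real_Ico_of_le min_le_max, max_sub_min_eq_abs']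

lemma abs_chiIco_sub_chiIco_le (a b c d t : ℝ) :
    |chiIco a b t - chiIco c d t| ≤
      chiIco (min a c) (max a c) t + chiIco (min b d) (max b d) t := by
  simp only [chiIco, Set.indicator_apply, Set.mem_Ico, min_le_iff, lt_max_iff]
  split_ifs <;> grind

lemma integral_abs_chiIco_sub_chiIco_le (a b c d : ℝ) :
    ∫ t, |chiIco a b t - chiIco c d t| ≤ |a - c| + |b - d| := by
  calc ∫ t, |chiIco a b t - chiIco c d t|
      ≤ ∫ t, (chiIco (min a c) (max a c) t + chiIco (min b d) (max b d) t) :=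
        integral_mono (((integrable_chiIco a b).sub (integrable_chiIco c d)).abs)
          ((integrable_chiIco _ _).add (integrable_chiIco _ _)) (abs_chiIco_sub_chiIco_le a b c d)
    _ = |a - c| + |b - d| := by
        rw [integral_add (integrable_chiIco _ _) (integrable_chiIco _ _),
          integral_chiIco_min_max, integral_chiIco_min_max]

lemma integral_abs_finsetSum_le {α ι : Type*} [MeasurableSpace α] {μ : Measure α}
    (s : Finset ι) {f : ι → α → ℝ} (hf : ∀ i ∈ s, Integrable (f i) μ) :
    ∫ x, |∑ i ∈ s, f i x| ∂μ ≤ ∑ i ∈ s, ∫ x, |f i x| ∂μ := by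
  rw [← integral_finsetSum s fun i hi => (hf i hi).abs]
  exact integral_mono (integrable_finsetSum s hf).abs
    (integrable_finsetSum s fun i hi => (hf i hi).abs) fun x => Finset.abs_sum_le_sum_abs _ _

theorem betti_function_stability_unweighted_general
    (ι : Type*) [Fintype ι]
    (a b c d : ι → ℝ) :
    ∫ t : ℝ, |(∑ i, chiIco (a i) (b i) t) - ∑ i, chiIco (c i) (d i) t|
      ≤ ∑ i, (|a i - c i| + |b i - d i|) := by
  simp_rw [← Finset.sum_sub_distrib]
  calc ∫ t, |∑ i, (chiIco (a i) (b i) t - chiIco (c i) (d i) t)|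
      ≤ ∑ i, ∫ t, |chiIco (a i) (b i) t - chiIco (c i) (d i) t| :=
        integral_abs_finsetSum_le _ fun i _ => (integrable_chiIco _ _).sub (integrable_chiIco _ _)
    _ ≤ ∑ i, (|a i - c i| + |b i - d i|) :=
        Finset.sum_le_sum fun i _ => integral_abs_chiIco_sub_chiIco_le _ _ _ _

/-- **Stability of unweighted Betti functions (Theorem 1 with `w ≡ 1`).** Given a
matching `i ↦ ((aᵢ, bᵢ), (cᵢ, dᵢ))` between two persistence diagrams, with `aᵢ ≤ bᵢ`
and `cᵢ ≤ dᵢ`, the Betti functions `β₁(t) = Σᵢ χ_{[aᵢ,bᵢ)}(t)` and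
`β₂(t) = Σᵢ χ_{[cᵢ,dᵢ)}(t)` satisfy
`∫ℝ |β₁(t) − β₂(t)| dt ≤ Σᵢ (|aᵢ − cᵢ| + |bᵢ − dᵢ|)`,
i.e. the `L¹` distance between the Betti functions is bounded by the `ℓ¹` transport
cost of the matching. -/
theorem betti_function_stability_unweighted
    (ι : Type*) [Fintype ι]
    (a b c d : ι → ℝ)
    (hab : ∀ i, a i ≤ b i) (hcd : ∀ i, c i ≤ d i) :
    ∫ t : ℝ, |(∑ i, chiIco (a i) (b i) t) - ∑ i, chiIco (c i) (d i) t|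
      ≤ ∑ i, (|a i - c i| + |b i - d i|) :=
  betti_function_stability_unweighted_general ι a b c d
end
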